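/- Let h̄ and u be smooth functions on a warped product (M, g_M) with g_M = g_N + e^{2u} g_F, both constant on fibers, and set h = h̄ - pu where p = dim F. Then h̄ satisfies ∂_t h̄ = |∇h̄|² - Δ_M h̄ - R_M if and only if h satisfies ∂_t h = -S - Δ_N h + ⟨∇h, ∇h + p∇u⟩, where S = R_N - p|∇u|². -/
import Mathlib


/-- Lemma 3.1(a): on a warped product `(M, g_M) = (N × F, g_N + e^{2u} g_F)` with
fiber dimension `p`, for fiber-constant functions `h̄`, `u` and `h = h̄ - p u`,
the conjugate-heat-type equation `∂_t h̄ = |∇h̄|² - Δ_M h̄ - R_M` holds iff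
`∂_t h = -S - Δ_N h + ⟨∇h, ∇h + p∇u⟩`, where `S = R_N - p|∇u|²`.

Here all geometric operators on `(N, g_N)` are abstracted:
`lap` is the Laplace–Beltrami operator, `gInn a b = ⟨∇a, ∇b⟩_{g_N}`, and the
hypotheses record the standard warped-product identities for `Δ_M`, `R_M`, the
evolution `∂_t u = Δ_M u = Δ u + p|∇u|²`, and the (bi)linearity of the operators. -/
theorem warped_conjugate_heat_equivalence {N : Type*} (p : ℕ)
    (u hbar h : N → ℝ)
    (du_t dhbar_t dh_t : N → ℝ)           -- time derivatives of u, h̄, h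
    (lap : (N → ℝ) → N → ℝ)               -- Δ = Δ_{g_N}
    (gInn : (N → ℝ) → (N → ℝ) → N → ℝ)    -- ⟨∇·, ∇·⟩_{g_N}
    (lapM : (N → ℝ) → N → ℝ)              -- Δ_{g_M} acting on fiber-constant functions
    (RN RM S : N → ℝ)
    -- h = h̄ - p u and accordingly for time derivatives
    (hh : ∀ x, h x = hbar x - (p : ℝ) * u x)
    (hdh : ∀ x, dh_t x = dhbar_t x - (p : ℝ) * du_t x)
    -- warped-product Laplacian: Δ_M f = Δ f + p⟨∇u, ∇f⟩
    (hlapM : ∀ f x, lapM f x = lap f x + (p : ℝ) * gInn u f x)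
    -- warped-product scalar curvature: R_M = R_N - 2pΔu - p(p+1)|∇u|²
    (hRM : ∀ x, RM x = RN x - 2 * (p : ℝ) * lap u x
        - (p : ℝ) * ((p : ℝ) + 1) * gInn u u x)
    -- S = R_N - p|∇u|²
    (hS : ∀ x, S x = RN x - (p : ℝ) * gInn u u x)
    -- ∂_t u = Δ_{g_M} u = Δu + p|∇u|²
    (hu : ∀ x, du_t x = lap u x + (p : ℝ) * gInn u u x)
    -- linearity of the Laplacian
    (lap_sub : ∀ f g : N → ℝ, ∀ x, lap (f - g) x = lap f x - lap g x)
    (lap_smul : ∀ (c : ℝ) (f : N → ℝ) (x), lap (fun y => c * f y) x = c * lap f x)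
    -- bilinearity and symmetry of ⟨∇·,∇·⟩
    (gInn_sub : ∀ f g k : N → ℝ, ∀ x, gInn (f - g) k x = gInn f k x - gInn g k x)
    (gInn_smul : ∀ (c : ℝ) (f k : N → ℝ) (x), gInn (fun y => c * f y) k x = c * gInn f k x)
    (gInn_symm : ∀ f k : N → ℝ, ∀ x, gInn f k x = gInn k f x) :
    (∀ x, dhbar_t x = gInn hbar hbar x - lapM hbar x - RM x)
      ↔ (∀ x, dh_t x = -S x - lap h x + (gInn h h x + (p : ℝ) * gInn h u x)) := by
  have hfun : h = hbar - (fun y => (p : ℝ) * u y) := funext fun x => hh x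
  have lapH : ∀ x, lap h x = lap hbar x - (p : ℝ) * lap u x := by
    intro x
    rw [hfun, lap_sub, lap_smul]
  have gH : ∀ k x, gInn h k x = gInn hbar k x - (p : ℝ) * gInn u k x := by
    intro k x
    rw [hfun, gInn_sub, gInn_smul]
  have gHH : ∀ x, gInn h h x
      = gInn hbar hbar x - 2 * (p : ℝ) * gInn u hbar x
        + (p : ℝ) * (p : ℝ) * gInn u u x := by
    intro x
    rw [gH, gInn_symm hbar h, gInn_symm u h, gH, gH, gInn_symm hbar u]
    ring
  have gHu : ∀ x, gInn h u x = gInn u hbar x - (p : ℝ) * gInn u u x := by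
    intro x
    rw [gH, gInn_symm hbar u]
  constructor
  · intro H x
    have hx := H x
    rw [hlapM, hRM] at hx
    rw [hdh, hu, hS, lapH, gHH, gHu, hx]
    ring
  · intro H x
    have hx := H x
    rw [hdh, hu, hS, lapH, gHH, gHu] at hx
    rw [hlapM, hRM]
    linarith
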